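/- Let G be a maximal graph (on a fixed finite vertex set) admitting a homomorphism to the Andrásfai graph Γ_d for some d ≥ 1, and let I_1 be a maximal independent set of G. Then G admits a proper 3-coloring {I_1, I_2, I_3} such that the subgraph of G induced on I_2 ∪ I_3 has no induced matching with two edges. -/

import Mathlib

/-- The Andrásfai graph `Γ_d`: vertex set `ZMod (3*d-1)`, with `x` adjacent to `y`
iff `y - x ∈ {d, ..., 2*d-1}` (the condition is symmetrized). -/
def andrasfai (d : ℕ) : SimpleGraph (ZMod (3 * d - 1)) where
  Adj x y := x ≠ y ∧ ((d ≤ (y - x).val ∧ (y - x).val ≤ 2 * d - 1) ∨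
      (d ≤ (x - y).val ∧ (x - y).val ≤ 2 * d - 1))
  symm := ⟨fun x y h => ⟨h.1.symm, h.2.symm⟩⟩
  loopless := ⟨fun x h => h.1 rfl⟩
/-- `S` is an independent set of `G`. -/
def IndepSet {V : Type*} (G : SimpleGraph V) (S : Set V) : Prop :=
  S.Pairwise fun a b => ¬ G.Adj a b
/-- The subgraph of `G` induced on `S` has no induced matching with two edges:
there are no four distinct vertices `u, v, u', v'` in `S` with `uv` and `u'v'`
edges and no other edges among them. -/
def NoInducedTwoMatching {V : Type*} (G : SimpleGraph V) (S : Set V) : Prop :=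
  ¬ ∃ u v u' v', u ∈ S ∧ v ∈ S ∧ u' ∈ S ∧ v' ∈ S ∧
    u ≠ u' ∧ u ≠ v' ∧ v ≠ u' ∧ v ≠ v' ∧
    G.Adj u v ∧ G.Adj u' v' ∧
    ¬ G.Adj u u' ∧ ¬ G.Adj u v' ∧ ¬ G.Adj v u' ∧ ¬ G.Adj v v'

/-! Since `G` is maximal among graphs with a homomorphism `f` to `Γ_d`, it is the pullback of
`Γ_d` along `f`. An independent set of `Γ_d` lies in an arc `[b, b + d)` of the cycle `ℤ/(3d-1)`,
and that whole arc is independent; so by maximality `I_1` is the preimage of `[b, b + d)`. The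
remaining arcs `[b + d, b + 2d - 1)` and `[b + 2d - 1, b + 3d - 1)` have length `≤ d`, hence are
independent. On their union, an arc of length `< 2d`, two vertices are adjacent exactly when their
positions differ by at least `d`. Of two edges, take the one with the lower bottom endpoint: that
endpoint lies at least `d` below the top endpoint of the other edge, so the matching is not
induced. All of this pulls back along `f`. -/

namespace ZMod

variable {n : ℕ}

theorem val_sub_add_val [NeZero n] (x y : ZMod n) :
    (x - y).val + y.val = x.val ∨ (x - y).val + y.val = x.val + n := by
  by_cases h : n ≤ (x - y).val + y.val
  · right
    simpa using val_add_val_of_le h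
  · left
    simpa using (val_add_of_lt (not_le.mp h)).symm

def arc (b : ZMod n) (lo hi : ℕ) : Set (ZMod n) :=
  {x | lo ≤ (x - b).val ∧ (x - b).val < hi}

variable (b : ZMod n) {lo mid hi : ℕ}

theorem arc_union_arc (hlo : lo ≤ mid) (hhi : mid ≤ hi) :
    arc b lo mid ∪ arc b mid hi = arc b lo hi := by
  ext x
  simp only [arc, Set.mem_union, Set.mem_ofPred_eq]
  omega

theorem disjoint_arc_arc {mid' : ℕ} (h : mid ≤ mid') :
    Disjoint (arc b lo mid) (arc b mid' hi) :=
  Set.disjoint_left.mpr fun _ hx hx' => by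
    simp only [arc, Set.mem_ofPred_eq] at hx hx'
    omega

theorem arc_zero_eq_univ [NeZero n] : arc b 0 n = Set.univ :=
  Set.eq_univ_of_forall fun x => ⟨Nat.zero_le _, val_lt (x - b)⟩

end ZMod

open ZMod

section Comap

variable {V W : Type*} {H : SimpleGraph W}

theorem SimpleGraph.exists_eq_comap_of_maximal_nonempty_hom {G : SimpleGraph V}
    (hG : Maximal (fun G' : SimpleGraph V => Nonempty (G' →g H)) G) :
    ∃ f : V → W, G = H.comap f :=
  let ⟨f⟩ := hG.1
  ⟨f, hG.eq_of_le ⟨Hom.comap f H⟩ f.le_comap⟩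

theorem IndepSet.preimage {S : Set W} (hS : IndepSet H S) (f : V → W) :
    IndepSet (H.comap f) (f ⁻¹' S) :=
  fun _ hu _ hv _ (hadj : H.Adj _ _) => hS hu hv hadj.ne hadj

theorem IndepSet.image_of_comap {f : V → W} {S : Set V} (hS : IndepSet (H.comap f) S) :
    IndepSet H (f '' S) := by
  rintro _ ⟨u, hu, rfl⟩ _ ⟨v, hv, rfl⟩ hne
  exact hS hu hv (ne_of_apply_ne f hne)

theorem NoInducedTwoMatching.preimage {S : Set W} (hS : NoInducedTwoMatching H S) (f : V → W) :
    NoInducedTwoMatching (H.comap f) (f ⁻¹' S) := by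
  rintro ⟨u, v, u', v', hu, hv, hu', hv', -, -, -, -, huv, hu'v', huu', huv', hvu', hvv'⟩
  simp only [SimpleGraph.comap_adj] at huv hu'v' huu' huv' hvu' hvv'
  -- the pattern of edges and non-edges keeps the four images distinct
  refine hS ⟨f u, f v, f u', f v', hu, hv, hu', hv', fun e => ?_, fun e => ?_, fun e => ?_,
    fun e => ?_, huv, hu'v', huu', huv', hvu', hvv'⟩
  · exact hvu' (e ▸ huv.symm)
  · exact huu' (e ▸ hu'v'.symm)
  · exact huu' (e ▸ huv)
  · exact huv' (e ▸ huv)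

end Comap

section Andrasfai

variable {d : ℕ} [NeZero (3 * d - 1)]

theorem andrasfai_adj_iff_val_sub (b x y : ZMod (3 * d - 1)) :
    (andrasfai d).Adj x y ↔
      ((y - b).val + d ≤ (x - b).val ∧ (x - b).val < (y - b).val + 2 * d) ∨
      ((x - b).val + d ≤ (y - b).val ∧ (y - b).val < (x - b).val + 2 * d) := by
  have hxy := val_sub_add_val (x - b) (y - b)
  have hyx := val_sub_add_val (y - b) (x - b)
  rw [sub_sub_sub_cancel_right] at hxy hyx
  have := val_lt (x - b)
  have := val_lt (y - b)
  have := val_lt (x - y)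
  have := val_lt (y - x)
  change x ≠ y ∧ _ ↔ _
  rw [Ne, ← sub_eq_zero, ← val_eq_zero]
  omega

theorem indepSet_andrasfai_arc (b : ZMod (3 * d - 1)) {lo hi : ℕ} (h : hi ≤ lo + d) :
    IndepSet (andrasfai d) (arc b lo hi) := by
  intro x hx y hy _ hadj
  rw [andrasfai_adj_iff_val_sub b] at hadj
  simp only [arc, Set.mem_ofPred_eq] at hx hy
  omega

theorem noInducedTwoMatching_andrasfai_arc (b : ZMod (3 * d - 1)) {lo hi : ℕ}
    (h : hi ≤ lo + 2 * d) : NoInducedTwoMatching (andrasfai d) (arc b lo hi) := by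
  rintro ⟨u, v, u', v', hu, hv, hu', hv', -, -, -, -, huv, hu'v', huu', huv', hvu', hvv'⟩
  simp only [arc, Set.mem_ofPred_eq] at hu hv hu' hv'
  simp only [andrasfai_adj_iff_val_sub b] at huv hu'v' huu' huv' hvu' hvv'
  omega

theorem exists_subset_arc_of_indepSet_andrasfai {S : Set (ZMod (3 * d - 1))}
    (hS : IndepSet (andrasfai d) S) : ∃ b, S ⊆ arc b 0 d := by
  have hd : 0 < d := by have := NeZero.ne (3 * d - 1); omega
  rcases S.eq_empty_or_nonempty with rfl | ⟨a, ha⟩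
  · exact ⟨0, Set.empty_subset _⟩
  have hnadj : ∀ x ∈ S, ∀ y ∈ S, ¬ (andrasfai d).Adj x y := fun x hx y hy hxy =>
    hS hx hy hxy.ne hxy
  -- `b` is the point of `S` lying furthest behind `a` within distance `< d`
  obtain ⟨b, ⟨hb, hba⟩, hbmax⟩ := Set.exists_max_image {s ∈ S | (a - s).val < d}
    (fun s => (a - s).val) (Set.toFinite _) ⟨a, ha, by simpa using hd⟩
  refine ⟨b, fun s hs => ?_⟩
  have hsb := (andrasfai_adj_iff_val_sub b s b).not.mp (hnadj s hs b hb)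
  have hsa := (andrasfai_adj_iff_val_sub b s a).not.mp (hnadj s hs a ha)
  have hs_max : (a - s).val < d → (a - s).val ≤ (a - b).val := fun h => hbmax s ⟨hs, h⟩
  have hsum := val_sub_add_val (a - b) (s - b)
  rw [sub_sub_sub_cancel_right] at hsum
  rw [sub_self, val_zero] at hsb
  have := val_lt (s - b)
  simp only [arc, Set.mem_ofPred_eq]
  omega

end Andrasfai

theorem maximal_hom_andrasfai_coloring_general {V : Type*} (d : ℕ) (hd : 1 ≤ d)
    (G : SimpleGraph V)
    (hmax : Maximal (fun G' : SimpleGraph V => Nonempty (G' →g andrasfai d)) G)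
    (I1 : Set V) (hI1 : IndepSet G I1)
    (hI1max : ∀ T : Set V, IndepSet G T → I1 ⊆ T → T = I1) :
    ∃ I2 I3 : Set V,
      IndepSet G I2 ∧ IndepSet G I3 ∧
      Disjoint I1 I2 ∧ Disjoint I1 I3 ∧ Disjoint I2 I3 ∧
      I1 ∪ I2 ∪ I3 = Set.univ ∧
      NoInducedTwoMatching G (I2 ∪ I3) := by
  have : NeZero (3 * d - 1) := ⟨by omega⟩
  obtain ⟨f, rfl⟩ := SimpleGraph.exists_eq_comap_of_maximal_nonempty_hom hmax
  obtain ⟨b, hb⟩ := exists_subset_arc_of_indepSet_andrasfai hI1.image_of_comap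
  obtain rfl : f ⁻¹' arc b 0 d = I1 :=
    hI1max _ ((indepSet_andrasfai_arc b (by omega)).preimage f) (Set.image_subset_iff.mp hb)
  refine ⟨f ⁻¹' arc b d (2 * d - 1), f ⁻¹' arc b (2 * d - 1) (3 * d - 1),
    (indepSet_andrasfai_arc b (by omega)).preimage f,
    (indepSet_andrasfai_arc b (by omega)).preimage f,
    (disjoint_arc_arc b le_rfl).preimage f, (disjoint_arc_arc b (by omega)).preimage f,
    (disjoint_arc_arc b le_rfl).preimage f, ?_, ?_⟩
  · rw [← Set.preimage_union, ← Set.preimage_union, arc_union_arc b (by omega) (by omega),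
      arc_union_arc b (by omega) (by omega), arc_zero_eq_univ, Set.preimage_univ]
  · rw [← Set.preimage_union, arc_union_arc b (by omega) (by omega)]
    exact (noInducedTwoMatching_andrasfai_arc b (by omega)).preimage f

/-- If `G` is a maximal graph (on a fixed finite vertex set) admitting a
homomorphism to an Andrásfai graph `Γ_d`, and `I_1` is a maximal independent set
of `G`, then `G` admits a proper 3-coloring `{I_1, I_2, I_3}` such that the
subgraph induced on `I_2 ∪ I_3` has no induced matching with two edges. -/
theorem maximal_hom_andrasfai_coloring {V : Type*} [Fintype V] (d : ℕ) (hd : 1 ≤ d)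
    (G : SimpleGraph V)
    (hmax : Maximal (fun G' : SimpleGraph V => Nonempty (G' →g andrasfai d)) G)
    (I1 : Set V) (hI1 : IndepSet G I1)
    (hI1max : ∀ T : Set V, IndepSet G T → I1 ⊆ T → T = I1) :
    ∃ I2 I3 : Set V,
      IndepSet G I2 ∧ IndepSet G I3 ∧
      Disjoint I1 I2 ∧ Disjoint I1 I3 ∧ Disjoint I2 I3 ∧
      I1 ∪ I2 ∪ I3 = Set.univ ∧
      NoInducedTwoMatching G (I2 ∪ I3) :=
  maximal_hom_andrasfai_coloring_general d hd G hmax I1 hI1 hI1max
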